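/- arXiv:1405.0928 — 4 statements merged into one kernel-verified Lean document; each statement's English description precedes it below -/
import Mathlib

section
/- Let B be a real n×p matrix of rank p and b a vector in R^n. Then the minimization problem min over x in R^p of the sum over i=1..n of |(b - Bx)_i| has at least one optimal solution of the form x̂ = B_p^{-1} b_p, where B_p is a nonsingular p×p submatrix of B formed by selecting p rows, and b_p is the corresponding subvector of b. -/
open Finset Filter

variable {n p : ℕ}

noncomputable def objF (B : Matrix (Fin n) (Fin p) ℝ) (b : Fin n → ℝ) (x : Fin p → ℝ) : ℝ :=
  ∑ i, |b i - B.mulVec x i|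

lemma objF_continuous (B : Matrix (Fin n) (Fin p) ℝ) (b : Fin n → ℝ) :
    Continuous (objF B b) := by
  apply continuous_finset_sum
  intro i _
  apply Continuous.abs
  apply Continuous.sub continuous_const
  simpa [Matrix.mulVec, dotProduct] using
    continuous_finset_sum Finset.univ (fun j _ => continuous_const.mul (continuous_apply j))

lemma exists_min (B : Matrix (Fin n) (Fin p) ℝ) (hinj : Function.Injective B.mulVec)
    (b : Fin n → ℝ) : ∃ y, ∀ x, objF B b y ≤ objF B b x := by
  obtain ⟨K, hK0, hK⟩ := ((LinearMap.injective_iff_antilipschitz B.mulVecLin).1 hinj)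
  set F := objF B b with hF
  refine (objF_continuous B b).exists_forall_le' 0 ?_
  rw [← Metric.cobounded_eq_cocompact]
  filter_upwards [eventually_cobounded_le_norm ((K : ℝ) * (F 0 + ∑ i, |b i|) + 1)] with x hx
  -- show F 0 ≤ F x
  by_contra hlt
  push_neg at hlt
  -- F x < F 0. Derive ‖x‖ bound.
  have hFx0 : F x ≤ F 0 := hlt.le
  have hb : ∀ i, |B.mulVec x i| ≤ F 0 + ∑ i, |b i| := by
    intro i
    have h2 : |b i - B.mulVec x i| ≤ F 0 :=
      le_trans (Finset.single_le_sum (f := fun j => |b j - B.mulVec x j|)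
        (fun j _ => abs_nonneg _) (Finset.mem_univ i)) hFx0
    have h3 : |b i| ≤ ∑ j, |b j| :=
      Finset.single_le_sum (f := fun j => |b j|) (fun j _ => abs_nonneg _) (Finset.mem_univ i)
    calc |B.mulVec x i| = |(B.mulVec x i - b i) + b i| := by ring_nf
      _ ≤ |B.mulVec x i - b i| + |b i| := abs_add_le _ _
      _ = |b i - B.mulVec x i| + |b i| := by rw [abs_sub_comm]
      _ ≤ F 0 + ∑ j, |b j| := add_le_add h2 h3
  have hnorm : ‖B.mulVec x‖ ≤ F 0 + ∑ i, |b i| := by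
    rcases Nat.eq_zero_or_pos n with h0 | h0
    · subst h0
      have h1 : ‖B.mulVec x‖ = 0 := by
        simp [norm_eq_zero]
      rw [h1]
      have : (0:ℝ) ≤ F 0 := Finset.sum_nonneg (fun i _ => abs_nonneg _)
      have : (0:ℝ) ≤ ∑ i, |b i| := Finset.sum_nonneg (fun i _ => abs_nonneg _)
      linarith
    · rw [pi_norm_le_iff_of_nonneg (le_trans (abs_nonneg _) (hb ⟨0, h0⟩))]
      intro i; simpa [Real.norm_eq_abs] using hb i
  have hxK : ‖x‖ ≤ (K : ℝ) * (F 0 + ∑ i, |b i|) := by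
    have := hK.le_mul_dist x 0
    simp only [dist_zero_right, map_zero, dist_zero_right] at this
    have hBx : (B.mulVecLin x) = B.mulVec x := rfl
    calc ‖x‖ ≤ K * ‖B.mulVecLin x‖ := by simpa [dist_eq_norm] using this
      _ ≤ K * (F 0 + ∑ i, |b i|) := by
          apply mul_le_mul_of_nonneg_left _ (K.coe_nonneg)
          rw [hBx]; exact hnorm
  linarith [hx]

noncomputable def sg (r : ℝ) : ℝ := if 0 ≤ r then 1 else -1

lemma sg_mul_self (r : ℝ) : sg r * r = |r| := by
  by_cases h0 : 0 ≤ r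
  · simp only [sg, if_pos h0, one_mul, abs_of_nonneg h0]
  · simp only [sg, if_neg h0, neg_one_mul, abs_of_nonpos (by linarith : r ≤ 0)]

lemma abs_eq_sg_mul {r v : ℝ} (h : 0 ≤ sg r * v) : |v| = sg r * v := by
  by_cases h0 : 0 ≤ r
  · simp only [sg, if_pos h0, one_mul] at h ⊢; exact abs_of_nonneg h
  · simp only [sg, if_neg h0, neg_one_mul] at h ⊢; rw [abs_of_nonpos (by linarith)]

lemma resid_shift (B : Matrix (Fin n) (Fin p) ℝ) (b : Fin n → ℝ) (y d : Fin p → ℝ) (t : ℝ)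
    (i : Fin n) :
    b i - B.mulVec (y + t • d) i = (b i - B.mulVec y i) - t * B.mulVec d i := by
  rw [Matrix.mulVec_add, Matrix.mulVec_smul]
  simp [smul_eq_mul]
  ring

lemma step_lemma (B : Matrix (Fin n) (Fin p) ℝ) (b : Fin n → ℝ) (y : Fin p → ℝ)
    (hy : ∀ x, objF B b y ≤ objF B b x) (d : Fin p → ℝ)
    (hdz : ∀ i, b i - B.mulVec y i = 0 → B.mulVec d i = 0)
    (i₀ : Fin n) (hc0 : B.mulVec d i₀ ≠ 0)
    (hpos : 0 < (b i₀ - B.mulVec y i₀) / B.mulVec d i₀) :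
    ∃ y', (∀ x, objF B b y' ≤ objF B b x) ∧
      (∀ i, b i - B.mulVec y i = 0 → b i - B.mulVec y' i = 0) ∧
      (∃ j, b j - B.mulVec y j ≠ 0 ∧ b j - B.mulVec y' j = 0) := by
  classical
  set r : Fin n → ℝ := fun i => b i - B.mulVec y i with hr
  set c : Fin n → ℝ := fun i => B.mulVec d i with hc
  have hrc : ∀ i, r i = 0 → c i = 0 := hdz
  have hcr : ∀ i, c i ≠ 0 → r i ≠ 0 := fun i h hri => h (hrc i hri)
  -- the function g
  have hg : ∀ t : ℝ, objF B b (y + t • d) = ∑ i, |r i - t * c i| := by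
    intro t; unfold objF; apply Finset.sum_congr rfl; intro i _
    rw [resid_shift]
  have hgmin : ∀ t : ℝ, ∑ i, |r i| ≤ ∑ i, |r i - t * c i| := by
    intro t
    have := hy (y + t • d)
    rw [hg] at this
    have h0 : objF B b y = ∑ i, |r i| := rfl
    linarith [this]
  -- key pointwise lemma
  have key : ∀ t : ℝ, (∀ i, 0 ≤ sg (r i) * (r i - t * c i)) →
      ∑ i, |r i - t * c i| = ∑ i, |r i| - t * ∑ i, sg (r i) * c i := by
    intro t ht
    have : ∀ i, |r i - t * c i| = sg (r i) * r i - t * (sg (r i) * c i) := by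
      intro i
      rw [abs_eq_sg_mul (ht i)]; ring
    rw [Finset.sum_congr rfl (fun i _ => this i), Finset.sum_sub_distrib, ← Finset.mul_sum]
    congr 1
    exact Finset.sum_congr rfl (fun i _ => sg_mul_self (r i))
  -- s = 0
  set s : ℝ := ∑ i, sg (r i) * c i with hs
  set S₀ : Finset (Fin n) := Finset.univ.filter (fun i => c i ≠ 0) with hS₀
  have hS₀ne : S₀.Nonempty := ⟨i₀, by simp [hS₀, hc0]; exact hc0⟩
  obtain ⟨iε, hiε, hiεmin⟩ := Finset.exists_min_image S₀ (fun i => |r i| / |c i|) hS₀ne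
  set ε : ℝ := |r iε| / |c iε| with hε
  have hicε : c iε ≠ 0 := by simpa [hS₀] using hiε
  have hε0 : 0 < ε := div_pos (abs_pos.2 (hcr _ hicε)) (abs_pos.2 hicε)
  clear_value ε
  have hsmall : ∀ t : ℝ, |t| ≤ ε → ∀ i, 0 ≤ sg (r i) * (r i - t * c i) := by
    intro t ht i
    by_cases hci : c i = 0
    · simp only [hci, mul_zero, sub_zero]
      rw [sg_mul_self]; exact abs_nonneg _
    · have hi : i ∈ S₀ := by simp [hS₀, hci]
      have h1 : |t * c i| ≤ |r i| := by
        rw [abs_mul]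
        calc |t| * |c i| ≤ ε * |c i| := by gcongr
          _ ≤ (|r i| / |c i|) * |c i| := by gcongr; exact hiεmin i hi
          _ = |r i| := by field_simp
      have hri : r i ≠ 0 := hcr i hci
      unfold sg
      rcases lt_or_gt_of_ne hri with h | h
      · rw [if_neg (not_le.2 h)]
        have h2 := abs_le.1 h1
        rw [abs_of_neg h] at h2
        nlinarith [h2.1, h2.2]
      · rw [if_pos h.le]
        have h2 := abs_le.1 h1
        rw [abs_of_pos h] at h2
        nlinarith [h2.1, h2.2]
  have hs0 : s = 0 := by
    have h1 := hgmin ε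
    rw [key ε (hsmall ε (by rw [abs_of_pos hε0])) ] at h1
    have h2 := hgmin (-ε)
    rw [key (-ε) (hsmall (-ε) (by rw [abs_neg, abs_of_pos hε0]))] at h2
    nlinarith
  -- t*
  set S : Finset (Fin n) := Finset.univ.filter (fun i => c i ≠ 0 ∧ 0 < r i / c i) with hSdef
  have hSne : S.Nonempty := ⟨i₀, by simp [hSdef, hc0, hpos]; exact ⟨hc0, hpos⟩⟩
  obtain ⟨i₁, hi₁, hi₁min⟩ := Finset.exists_min_image S (fun i => r i / c i) hSne
  have hi₁' : c i₁ ≠ 0 ∧ 0 < r i₁ / c i₁ := by simpa [hSdef] using hi₁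
  set T : ℝ := r i₁ / c i₁ with hT
  have hT0 : 0 < T := hi₁'.2
  clear_value T
  have hTgood : ∀ i, 0 ≤ sg (r i) * (r i - T * c i) := by
    intro i
    by_cases hci : c i = 0
    · simp only [hci, mul_zero, sub_zero]
      rw [sg_mul_self]; exact abs_nonneg _
    · have hri : r i ≠ 0 := hcr i hci
      have hfact : r i - T * c i = c i * (r i / c i - T) := by field_simp
      rcases lt_or_gt_of_ne (show r i / c i ≠ 0 from div_ne_zero hri hci) with hneg | hposr
      · -- ratio < 0
        have h2 : r i / c i - T < 0 := by linarith
        unfold sg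
        rcases lt_or_gt_of_ne hri with h | h
        · rw [if_neg (not_le.2 h)]
          have hcpos : 0 < c i := by
            rcases lt_or_gt_of_ne hci with h' | h'
            · exfalso; have := div_pos_iff.2 (Or.inr ⟨h, h'⟩); linarith
            · exact h'
          nlinarith [hfact]
        · rw [if_pos h.le]
          have hcneg : c i < 0 := by
            rcases lt_or_gt_of_ne hci with h' | h'
            · exact h'
            · exfalso; have := div_pos h h'; linarith
          nlinarith [hfact]
      · -- ratio > 0
        have hiS : i ∈ S := by simp [hSdef, hci, hposr]
        have h2 : T ≤ r i / c i := hi₁min i hiS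
        unfold sg
        rcases lt_or_gt_of_ne hri with h | h
        · rw [if_neg (not_le.2 h)]
          have hcneg : c i < 0 := by
            rcases lt_or_gt_of_ne hci with h' | h'
            · exact h'
            · exfalso; have := div_pos_iff.1 hposr
              rcases this with ⟨h1,_⟩|⟨h1,h2'⟩ <;> linarith
          rw [hfact]
          have hq : 0 ≤ (-(c i)) * (r i / c i - T) :=
            mul_nonneg (by linarith) (by linarith)
          nlinarith [hq]
        · rw [if_pos h.le]
          have hcpos : 0 < c i := by
            rcases lt_or_gt_of_ne hci with h' | h'
            · exfalso; have := div_pos_iff.1 hposr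
              rcases this with ⟨h1,h2'⟩|⟨h1,_⟩ <;> linarith
            · exact h'
          rw [hfact]
          have hq : 0 ≤ c i * (r i / c i - T) :=
            mul_nonneg hcpos.le (by linarith)
          nlinarith [hq]
  refine ⟨y + T • d, ?_, ?_, ⟨i₁, hcr i₁ hi₁'.1, ?_⟩⟩
  · intro x
    rw [hg T, key T hTgood, hs0]
    have h0 : objF B b y = ∑ i, |r i| := rfl
    have := hy x
    simp only [mul_zero, sub_zero]
    linarith
  · intro i hri
    rw [resid_shift]
    have h1 : r i = 0 := hri
    show r i - T * c i = 0
    rw [h1, hrc i h1]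
    ring
  · rw [resid_shift]
    show r i₁ - T * c i₁ = 0
    rw [hT, div_mul_cancel₀ _ hi₁'.1, sub_self]

lemma exists_spanning_min (B : Matrix (Fin n) (Fin p) ℝ)
    (hinj : Function.Injective B.mulVec) (b : Fin n → ℝ) :
    ∃ z, (∀ x, objF B b z ≤ objF B b x) ∧
      ∀ d : Fin p → ℝ, (∀ i, b i - B.mulVec z i = 0 → B.mulVec d i = 0) → d = 0 := by
  classical
  obtain ⟨y0, hy0⟩ := exists_min B hinj b
  suffices H : ∀ N (y : Fin p → ℝ), (∀ x, objF B b y ≤ objF B b x) →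
      (Finset.univ.filter (fun i => b i - B.mulVec y i ≠ 0)).card ≤ N →
      ∃ z, (∀ x, objF B b z ≤ objF B b x) ∧
        ∀ d : Fin p → ℝ, (∀ i, b i - B.mulVec z i = 0 → B.mulVec d i = 0) → d = 0 by
    exact H _ y0 hy0 le_rfl
  intro N
  induction N with
  | zero =>
    intro y hy hcard
    refine ⟨y, hy, fun d hd => ?_⟩
    have hall : ∀ i, b i - B.mulVec y i = 0 := by
      intro i; by_contra h
      have hmem : i ∈ Finset.univ.filter (fun i => b i - B.mulVec y i ≠ 0) := by simp [h]
      have := Finset.card_pos.2 ⟨i, hmem⟩; omega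
    have h0 : B.mulVec d = B.mulVec 0 := by
      rw [Matrix.mulVec_zero]; exact funext fun i => hd i (hall i)
    exact hinj h0
  | succ N ih =>
    intro y hy hcard
    by_cases hspan : ∀ d : Fin p → ℝ,
        (∀ i, b i - B.mulVec y i = 0 → B.mulVec d i = 0) → d = 0
    · exact ⟨y, hy, hspan⟩
    · push_neg at hspan
      obtain ⟨d, hdz, hd0⟩ := hspan
      have hcne : B.mulVec d ≠ 0 := fun h => hd0 (hinj (by rw [h, Matrix.mulVec_zero]))
      obtain ⟨i₀, hi₀⟩ : ∃ i, B.mulVec d i ≠ 0 := by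
        by_contra h; push_neg at h; exact hcne (funext h)
      have hri₀ : b i₀ - B.mulVec y i₀ ≠ 0 := fun h => hi₀ (hdz i₀ h)
      have hstep : ∃ y', (∀ x, objF B b y' ≤ objF B b x) ∧
          (∀ i, b i - B.mulVec y i = 0 → b i - B.mulVec y' i = 0) ∧
          (∃ j, b j - B.mulVec y j ≠ 0 ∧ b j - B.mulVec y' j = 0) := by
        rcases lt_or_gt_of_ne (div_ne_zero hri₀ hi₀) with hneg | hpos
        · refine step_lemma B b y hy (-d) ?_ i₀ ?_ ?_
          · intro i hi; rw [Matrix.mulVec_neg, Pi.neg_apply, hdz i hi, neg_zero]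
          · rw [Matrix.mulVec_neg, Pi.neg_apply]; exact neg_ne_zero.2 hi₀
          · rw [Matrix.mulVec_neg, Pi.neg_apply, div_neg]; linarith
        · exact step_lemma B b y hy d hdz i₀ hi₀ hpos
      obtain ⟨y', h1, h2, j, hj1, hj2⟩ := hstep
      apply ih y' h1
      have hsub : Finset.univ.filter (fun i => b i - B.mulVec y' i ≠ 0) ⊆
          Finset.univ.filter (fun i => b i - B.mulVec y i ≠ 0) := by
        intro i hi
        simp only [Finset.mem_filter, Finset.mem_univ, true_and] at hi ⊢
        intro h; exact hi (h2 i h)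
      have hjy : j ∈ Finset.univ.filter (fun i => b i - B.mulVec y i ≠ 0) := by simp [hj1]
      have hjy' : j ∉ Finset.univ.filter (fun i => b i - B.mulVec y' i ≠ 0) := by simp [hj2]
      have hlt : (Finset.univ.filter (fun i => b i - B.mulVec y' i ≠ 0)).card <
          (Finset.univ.filter (fun i => b i - B.mulVec y i ≠ 0)).card :=
        Finset.card_lt_card (Finset.ssubset_iff_of_subset hsub |>.2 ⟨j, hjy, hjy'⟩)
      omega

/-- l1 residual minimization has a basic optimal solution of the
form `x̂ = B_p⁻¹ b_p` for a nonsingular `p × p` row-submatrix `B_p` of `B`. -/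
theorem stmt_0 (n p : ℕ) (hpn : p ≤ n)
    (B : Matrix (Fin n) (Fin p) ℝ) (hB : B.rank = p) (b : Fin n → ℝ) :
    ∃ f : Fin p → Fin n, Function.Injective f ∧
      (B.submatrix f id).det ≠ 0 ∧
      (∀ x : Fin p → ℝ,
        ∑ i, |b i - (B.mulVec ((B.submatrix f id)⁻¹.mulVec (b ∘ f))) i| ≤
          ∑ i, |b i - (B.mulVec x) i|) := by
  classical
  have hfr : Module.finrank ℝ (Fin p → ℝ) = p := by
    simp [Module.finrank_fintype_fun_eq_card]
  have hinj : Function.Injective B.mulVec := by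
    have h2 := LinearMap.finrank_range_add_finrank_ker B.mulVecLin
    have h3 : Module.finrank ℝ (LinearMap.range B.mulVecLin) = p := hB
    have h4 : Module.finrank ℝ (LinearMap.ker B.mulVecLin) = 0 := by
      rw [h3, hfr] at h2; omega
    have h5 : LinearMap.ker B.mulVecLin = ⊥ := Submodule.finrank_eq_zero.1 h4
    exact LinearMap.ker_eq_bot.1 h5
  obtain ⟨z, hzmin, hzspan⟩ := exists_spanning_min B hinj b
  -- the submatrix on the zero-residual rows
  set K : Finset (Fin n) := Finset.univ.filter (fun i => b i - B.mulVec z i = 0) with hK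
  set M : Matrix {i // i ∈ K} (Fin p) ℝ := B.submatrix Subtype.val id with hM
  have hMmul : ∀ (d : Fin p → ℝ) (k : {i // i ∈ K}), M.mulVec d k = B.mulVec d k.1 := by
    intro d k; rfl
  have hMinj : LinearMap.ker M.mulVecLin = ⊥ := by
    rw [LinearMap.ker_eq_bot]
    intro d d' hdd
    -- show injective: enough M.mulVec d = 0 → d = 0 -- use sub
    have h6 : ∀ e : Fin p → ℝ, M.mulVec e = 0 → e = 0 := by
      intro e he
      apply hzspan e
      intro i hi
      have : M.mulVec e ⟨i, by simp [hK, hi]⟩ = 0 := by rw [he]; rfl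
      rwa [hMmul] at this
    have h7 : M.mulVec (d - d') = 0 := by
      have : M.mulVecLin d = M.mulVecLin d' := hdd
      simp only [Matrix.mulVec_sub]
      rw [show M.mulVec d = M.mulVec d' from this]
      simp
    have := h6 _ h7
    exact sub_eq_zero.1 this
  have hMrank : M.rank = p := by
    have h2 := LinearMap.finrank_range_add_finrank_ker M.mulVecLin
    rw [hMinj] at h2
    simp only [finrank_bot, add_zero, hfr] at h2
    exact h2
  have hspan : Submodule.span ℝ (Set.range M) = ⊤ := by
    apply Submodule.eq_top_of_finrank_eq
    rw [show Set.range M = Set.range M.row from rfl, ← Matrix.rank_eq_finrank_span_row, hMrank, hfr]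
  obtain ⟨t, htsub, htspan, htli⟩ := exists_linearIndependent ℝ (Set.range M)
  rw [hspan] at htspan
  have htfin : t.Finite := htli.setFinite
  haveI : Fintype t := htfin.fintype
  have htcard : Fintype.card t = p := by
    have h8 := finrank_span_set_eq_card htli
    rw [htspan] at h8
    rw [← Set.toFinset_card, ← h8, finrank_top, hfr]
  set e : Fin p ≃ t := (Fintype.equivFinOfCardEq htcard).symm with he
  have hchoice : ∀ u : t, ∃ k : {i // i ∈ K}, M k = (u : Fin p → ℝ) := by
    intro u; exact htsub u.2
  choose g hg using hchoice
  set f : Fin p → Fin n := fun j => (g (e j)).1 with hf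
  have hBf : ∀ j, B (f j) = ((e j : t) : Fin p → ℝ) := by
    intro j
    have := hg (e j)
    funext k
    calc B (f j) k = M (g (e j)) k := rfl
      _ = ((e j : t) : Fin p → ℝ) k := by rw [this]
  have hfK : ∀ j, f j ∈ K := fun j => (g (e j)).2
  have hfz : ∀ j, b (f j) - B.mulVec z (f j) = 0 := by
    intro j; have := hfK j; simpa [hK] using this
  have hfinj : Function.Injective f := by
    intro j j' hjj
    have : ((e j : t) : Fin p → ℝ) = ((e j' : t) : Fin p → ℝ) := by
      rw [← hBf, ← hBf, hjj]
    exact e.injective (Subtype.ext this)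
  -- rows are linearly independent
  have hrows : LinearIndependent ℝ (fun j : Fin p => B (f j)) := by
    have : (fun j : Fin p => B (f j)) = (fun x : t => (x : Fin p → ℝ)) ∘ (fun j => e j) := by
      funext j; rw [hBf]; rfl
    rw [this]
    exact htli.comp _ e.injective
  have hdet : (B.submatrix f id).det ≠ 0 := by
    intro hdet0
    obtain ⟨v, hv0, hvM⟩ := (Matrix.exists_vecMul_eq_zero_iff).2 hdet0
    apply hv0
    have h9 : ∑ j, v j • B (f j) = 0 := by
      funext k
      have := congrFun hvM k
      simpa [Matrix.vecMul, dotProduct] using this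
    exact funext (Fintype.linearIndependent_iff.1 hrows v h9)
  -- the solution equals z
  have hMz : (B.submatrix f id).mulVec z = b ∘ f := by
    funext j
    have h10 : (B.submatrix f id).mulVec z j = B.mulVec z (f j) := rfl
    rw [h10]
    have := hfz j
    simp only [Function.comp_apply]
    linarith
  have hsol : (B.submatrix f id)⁻¹.mulVec (b ∘ f) = z := by
    rw [← hMz, Matrix.mulVec_mulVec, Matrix.nonsing_inv_mul _ (isUnit_iff_ne_zero.2 hdet),
      Matrix.one_mulVec]
  exact ⟨f, hfinj, hdet, by rw [hsol]; exact hzmin⟩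
end

section
/- Let n ≥ p, d ∈ R^n, c_1,...,c_p > 0, b = (0_p, d) ∈ R^{n+p} and B the stacked matrix [-I_p ; D_p ; 0_{(n-p)×p}] with D_p = diag(c_1,...,c_p). Then Σ_{i=1}^{n+p} |(b - By)_i| = Σ_{i=1}^p |y_i| + Σ_{i=1}^p |d_i - c_i y_i| + Σ_{i=p+1}^n |d_i|, and the vector y* with y*_j = 0 if c_j ≤ 1 and y*_j = d_j / c_j if c_j > 1 is a minimizer of this expression over y ∈ R^p. -/
private lemma aux_pt (cj dj t : ℝ) (hc : 0 < cj) :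
    |(if cj ≤ 1 then (0:ℝ) else dj / cj)| +
      |dj - cj * (if cj ≤ 1 then (0:ℝ) else dj / cj)| ≤ |t| + |dj - cj * t| := by
  have habs : |dj| ≤ cj * |t| + |dj - cj * t| := by
    have := abs_sub_abs_le_abs_sub dj (cj * t)
    have h2 : |cj * t| = cj * |t| := by rw [abs_mul, abs_of_pos hc]
    have h3 : |dj| - |cj * t| ≤ |dj - cj * t| := this
    linarith
  split_ifs with h
  · have : cj * |t| ≤ |t| := by nlinarith [abs_nonneg t]
    simp only [mul_zero, sub_zero, abs_zero, zero_add]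
    linarith
  · have h1 : 1 ≤ cj := le_of_lt (lt_of_not_ge h)
    have hz : dj - cj * (dj / cj) = 0 := by field_simp; ring
    rw [hz, abs_zero, add_zero, abs_div, abs_of_pos hc, div_le_iff₀ hc]
    have : |dj - cj * t| ≤ cj * |dj - cj * t| := by nlinarith [abs_nonneg (dj - cj*t)]
    nlinarith [abs_nonneg t]

private lemma sum_split (n p : ℕ) (hpn : p ≤ n) (g : Fin n → ℝ) :
    ∑ i : Fin n, g i =
      (∑ j : Fin p, g (Fin.castLE hpn j)) + ∑ i : Fin n, if p ≤ (i : ℕ) then g i else 0 := by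
  classical
  rw [← Finset.sum_filter_add_sum_filter_not Finset.univ (fun i : Fin n => (i : ℕ) < p) g]
  congr 1
  · have hset : Finset.univ.filter (fun i : Fin n => (i : ℕ) < p)
        = Finset.univ.map (Fin.castLEEmb hpn) := by
      ext i
      simp only [Finset.mem_filter, Finset.mem_univ, true_and, Finset.mem_map,
        Fin.castLEEmb, Function.Embedding.coeFn_mk]
      constructor
      · intro h; exact ⟨⟨(i : ℕ), h⟩, by ext; simp⟩
      · rintro ⟨j, rfl⟩; simpa using j.isLt
    rw [hset, Finset.sum_map]
    rfl
  · rw [Finset.sum_filter]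
    apply Finset.sum_congr rfl
    intro i _
    simp [not_lt]

/-- diagonal case `B = [-I_p; D_p; 0]` with `D_p = diag(c)`:
decomposition of the objective and an explicit minimizer. -/
theorem stmt_5 (n p : ℕ) (hpn : p ≤ n) (d : Fin n → ℝ)
    (c : Fin p → ℝ) (hc : ∀ j, 0 < c j) (hmono : Antitone c) :
    let b : Fin p ⊕ Fin n → ℝ := Sum.elim 0 d
    let B : Matrix (Fin p ⊕ Fin n) (Fin p) ℝ :=
      Matrix.fromRows (-1 : Matrix (Fin p) (Fin p) ℝ)
        (Matrix.of fun (i : Fin n) (j : Fin p) => if (i : ℕ) = (j : ℕ) then c j else 0)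
    let F : (Fin p → ℝ) → ℝ := fun y => ∑ i, |(b - B.mulVec y) i|
    let ystar : Fin p → ℝ := fun j =>
      if c j ≤ 1 then 0 else d (Fin.castLE hpn j) / c j
    (∀ y : Fin p → ℝ,
      F y = (∑ j, |y j|) + (∑ j : Fin p, |d (Fin.castLE hpn j) - c j * y j|) +
          ∑ i : Fin n, if p ≤ (i : ℕ) then |d i| else 0) ∧
    (∀ y : Fin p → ℝ, F ystar ≤ F y) := by
  intro b B F ystar
  have hrow : ∀ (y : Fin p → ℝ) (i : Fin n),
      B.mulVec y (Sum.inr i) = if h : (i : ℕ) < p then c ⟨i, h⟩ * y ⟨i, h⟩ else 0 := by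
    intro y i
    simp only [B, Matrix.mulVec, Matrix.fromRows_apply_inr, Matrix.of_apply, dotProduct, Sum.elim_inr]
    split_ifs with h
    · rw [Finset.sum_eq_single (M := ℝ) (⟨(i : ℕ), h⟩ : Fin p)]
      · simp
      · intro j _ hj
        have : (i : ℕ) ≠ (j : ℕ) := fun he => hj (by ext; simp [he.symm])
        simp [this]
      · simp
    · apply Finset.sum_eq_zero
      intro j _
      have : (i : ℕ) ≠ (j : ℕ) := fun he => h (he ▸ j.isLt)
      simp [this]
  have hF : ∀ y : Fin p → ℝ,
      F y = (∑ j, |y j|) + (∑ j : Fin p, |d (Fin.castLE hpn j) - c j * y j|) +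
        ∑ i : Fin n, if p ≤ (i : ℕ) then |d i| else 0 := by
    intro y
    have : F y = (∑ j : Fin p, |y j|) +
        ∑ i : Fin n, |d i - if h : (i : ℕ) < p then c ⟨i, h⟩ * y ⟨i, h⟩ else 0| := by
      simp only [F, Fintype.sum_sum_type]
      congr 1
      · apply Finset.sum_congr rfl
        intro j _
        simp only [b, B, Pi.sub_apply, Sum.elim_inl, Pi.zero_apply,
          Matrix.mulVec, Matrix.fromRows_apply_inl, Matrix.of_apply, dotProduct]
        rw [Finset.sum_congr rfl (fun k _ => by
          show (-1 : Matrix (Fin p) (Fin p) ℝ) j k * y k = (if j = k then (-1:ℝ) else 0) * y k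
          simp [Matrix.one_apply]; split_ifs <;> ring)]
        simp [ite_mul, abs_neg, Finset.sum_ite_eq]
      · apply Finset.sum_congr rfl
        intro i _
        rw [Pi.sub_apply, hrow]
        simp [b]
    rw [this, sum_split n p hpn (fun i => |d i - if h : (i : ℕ) < p then c ⟨i, h⟩ * y ⟨i, h⟩ else 0|)]
    have h1 : ∀ j : Fin p,
        |d (Fin.castLE hpn j) - if h : ((Fin.castLE hpn j : Fin n) : ℕ) < p
          then c ⟨(Fin.castLE hpn j : Fin n), h⟩ * y ⟨(Fin.castLE hpn j : Fin n), h⟩ else 0|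
        = |d (Fin.castLE hpn j) - c j * y j| := by
      intro j
      rw [dif_pos (by simp [Fin.castLE])]
      congr 2 <;> ext <;> simp
    have h2 : ∀ i : Fin n, (if p ≤ (i : ℕ) then
        |d i - if h : (i : ℕ) < p then c ⟨i, h⟩ * y ⟨i, h⟩ else 0| else 0)
        = if p ≤ (i : ℕ) then |d i| else 0 := by
      intro i
      split_ifs with h h' <;> simp_all <;> omega
    rw [Finset.sum_congr rfl (fun j _ => h1 j), Finset.sum_congr rfl (fun i _ => h2 i)]
    ring
  refine ⟨hF, fun y => ?_⟩
  rw [hF, hF]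
  gcongr ?_ + _
  rw [← Finset.sum_add_distrib, ← Finset.sum_add_distrib]
  apply Finset.sum_le_sum
  intro j _
  exact aux_pt (c j) (d (Fin.castLE hpn j)) (y j) (hc j)
end

section
/- Let n ≥ p, m - p ≥ n, d̃ ∈ R^n, and let A = [0_{(n-p)×p}; A_p] ∈ R^{n×p}, B_mat ∈ R^{n×(m-p)} be in generalized-SVD diagonal form with A_p = diag(α_1,...,α_p), 0 ≤ α_1 ≤ ... ≤ α_p ≤ 1, and B_mat having blocks I_{n-p} and B_p = diag(β_1,...,β_p) with 1 ≥ β_1 ≥ ... ≥ β_p > 0. With b = (0_p, B_mat^+ d̃) ∈ R^m and B = [-I_p; B_mat^+ A] ∈ R^{m×p}, one has for all y ∈ R^p: Σ_{i=1}^m |(b - By)_i| = Σ_{i=1}^p |y_i| + Σ_{i=1}^{n-p} |d̃_i| + Σ_{i=1}^p |d̃_{n-p+i}/β_i - (α_i/β_i) y_i|, and the vector y* with y*_j = 0 if α_j ≤ β_j and y*_j = d̃_{n-p+j}/α_j if α_j > β_j is a minimizer. -/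
/-- generalized-SVD diagonal form. Decomposition of the l1
objective and an explicit minimizer. Here `k = m - p` with `n ≤ k`. -/
theorem stmt_13 (n p k : ℕ) (hpn : p ≤ n) (hnk : n ≤ k)
    (dt : Fin n → ℝ)
    (α : Fin p → ℝ) (hα0 : ∀ j, 0 ≤ α j) (hα1 : ∀ j, α j ≤ 1)
    (hαmono : Monotone α)
    (β : Fin p → ℝ) (hβ0 : ∀ j, 0 < β j) (hβ1 : ∀ j, β j ≤ 1)
    (hβmono : Antitone β) :
    -- b = (0_p, B_mat⁺ d̃): entries d̃_i for i < n-p, d̃_i/β_{i-(n-p)} for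
    -- n-p ≤ i < n, and 0 beyond
    let b : Fin p ⊕ Fin k → ℝ := Sum.elim 0 fun i : Fin k =>
      if h1 : (i : ℕ) < n - p then dt ⟨i, by omega⟩
      else if h2 : (i : ℕ) < n then dt ⟨i, h2⟩ / β ⟨(i : ℕ) - (n - p), by omega⟩
      else 0
    -- B = [-I_p ; B_mat⁺ A]
    let B : Matrix (Fin p ⊕ Fin k) (Fin p) ℝ :=
      Matrix.fromRows (-1 : Matrix (Fin p) (Fin p) ℝ)
        (Matrix.of fun (i : Fin k) (j : Fin p) =>
          if (i : ℕ) = n - p + (j : ℕ) then α j / β j else 0)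
    let F : (Fin p → ℝ) → ℝ := fun y => ∑ i, |(b - B.mulVec y) i|
    let ystar : Fin p → ℝ := fun j =>
      if α j ≤ β j then 0 else dt ⟨n - p + (j : ℕ), by omega⟩ / α j
    (∀ y : Fin p → ℝ,
      F y = (∑ j, |y j|) +
        (∑ i : Fin n, if (i : ℕ) < n - p then |dt i| else 0) +
        ∑ j : Fin p,
          |dt ⟨n - p + (j : ℕ), by omega⟩ / β j - (α j / β j) * y j|) ∧
    (∀ y : Fin p → ℝ, F ystar ≤ F y) := by
  intro b B F ystar
  have hrow : ∀ (y : Fin p → ℝ) (i : Fin k),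
      (B.mulVec y) (Sum.inr i) =
        if h : n - p ≤ (i : ℕ) ∧ (i : ℕ) < n then
          (α ⟨(i : ℕ) - (n - p), by omega⟩ / β ⟨(i : ℕ) - (n - p), by omega⟩) *
            y ⟨(i : ℕ) - (n - p), by omega⟩
        else 0 := by
    intro y i
    show (Matrix.fromRows _ _ |>.mulVec y) (Sum.inr i) = _
    rw [Matrix.fromRows_mulVec]
    simp only [Sum.elim_inr, Matrix.mulVec, dotProduct, Matrix.of_apply]
    split
    · next h =>
      rw [Finset.sum_eq_single (⟨(i : ℕ) - (n - p), by omega⟩ : Fin p)]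
      · rw [if_pos (by simp; omega)]
      · intro j _ hj
        rw [if_neg, zero_mul]
        intro hc
        exact hj (by apply Fin.ext; simp; omega)
      · intro h; exact absurd (Finset.mem_univ _) h
    · next h =>
      apply Finset.sum_eq_zero
      intro j _
      rw [if_neg (by omega), zero_mul]
  have key : ∀ y : Fin p → ℝ,
      F y = (∑ j, |y j|) +
        (∑ i : Fin n, if (i : ℕ) < n - p then |dt i| else 0) +
        ∑ j : Fin p,
          |dt ⟨n - p + (j : ℕ), by omega⟩ / β j - (α j / β j) * y j| := by
    intro y
    show (∑ i, |(b - B.mulVec y) i|) = _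
    rw [Fintype.sum_sum_type]
    have h1 : ∀ j : Fin p, |(b - B.mulVec y) (Sum.inl j)| = |y j| := by
      intro j
      have : (B.mulVec y) (Sum.inl j) = -(y j) := by
        show (Matrix.fromRows _ _ |>.mulVec y) (Sum.inl j) = _
        rw [Matrix.fromRows_mulVec]
        simp [Matrix.neg_mulVec]
      simp [Pi.sub_apply, this, b, abs_neg]
    -- the ℕ-indexed summand for the second block
    set gk : ℕ → ℝ := fun i =>
      if h1 : i < n - p then |dt ⟨i, by omega⟩|
      else if h2 : i < n then
        |dt ⟨i, h2⟩ / β ⟨i - (n - p), by omega⟩ -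
          (α ⟨i - (n - p), by omega⟩ / β ⟨i - (n - p), by omega⟩) *
            y ⟨i - (n - p), by omega⟩|
      else 0 with hgk
    have h2 : ∀ i : Fin k, |(b - B.mulVec y) (Sum.inr i)| = gk i := by
      intro i
      rw [Pi.sub_apply, hrow]
      simp only [hgk, b, Sum.elim_inr]
      by_cases hc1 : (i : ℕ) < n - p
      · rw [dif_pos hc1, dif_pos hc1, dif_neg (by omega), sub_zero]
      · by_cases hc2 : (i : ℕ) < n
        · rw [dif_neg hc1, dif_pos hc2, dif_neg hc1, dif_pos hc2,
            dif_pos (by omega)]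
        · rw [dif_neg hc1, dif_neg hc2, dif_neg hc1, dif_neg hc2,
            dif_neg (by omega), sub_zero, abs_zero]
    simp only [h1, h2]
    rw [Fin.sum_univ_eq_sum_range gk k]
    have hsplit : ∑ i ∈ Finset.range k, gk i =
        (∑ i ∈ Finset.range (n - p), gk i) + ∑ i ∈ Finset.Ico (n - p) n, gk i := by
      rw [Finset.range_eq_Ico, ← Finset.sum_Ico_consecutive _ (Nat.zero_le (n - p)) (by omega : n - p ≤ k),
        ← Finset.sum_Ico_consecutive _ (by omega : n - p ≤ n) hnk, ← Finset.range_eq_Ico]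
      have : ∑ i ∈ Finset.Ico n k, gk i = 0 := by
        apply Finset.sum_eq_zero
        intro i hi
        rw [Finset.mem_Ico] at hi
        simp only [hgk]
        rw [dif_neg (by omega), dif_neg (by omega)]
      rw [this, add_zero]
    rw [hsplit]
    set gn : ℕ → ℝ := fun i =>
      if h : i < n then (if i < n - p then |dt ⟨i, h⟩| else 0) else 0 with hgn
    have e1 : (∑ i : Fin n, if (i : ℕ) < n - p then |dt i| else 0) =
        ∑ i ∈ Finset.range (n - p), gk i := by
      have step1 : (∑ i : Fin n, if (i : ℕ) < n - p then |dt i| else 0) =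
          ∑ i : Fin n, gn (i : ℕ) := by
        apply Finset.sum_congr rfl
        intro i _
        simp only [hgn]
        rw [dif_pos i.isLt]
      rw [step1, Fin.sum_univ_eq_sum_range gn n]
      rw [Finset.range_eq_Ico, ← Finset.sum_Ico_consecutive _ (Nat.zero_le (n - p)) (by omega : n - p ≤ n),
          ← Finset.range_eq_Ico]
      have : ∑ i ∈ Finset.Ico (n - p) n, gn i = 0 := by
        apply Finset.sum_eq_zero
        intro i hi
        rw [Finset.mem_Ico] at hi
        simp only [hgn]
        rw [dif_pos hi.2, if_neg (by omega)]
      rw [this, add_zero]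
      apply Finset.sum_congr rfl
      intro i hi
      rw [Finset.mem_range] at hi
      simp only [hgn, hgk]
      rw [dif_pos (by omega), if_pos hi, dif_pos hi]
    have e2 : (∑ j : Fin p,
        |dt ⟨n - p + (j : ℕ), by omega⟩ / β j - (α j / β j) * y j|) =
        ∑ i ∈ Finset.Ico (n - p) n, gk i := by
      rw [Finset.sum_Ico_eq_sum_range]
      have hnp : n - (n - p) = p := by omega
      rw [hnp]
      set gp : ℕ → ℝ := fun j =>
        if h : j < p then
          |dt ⟨n - p + j, by omega⟩ / β ⟨j, h⟩ - (α ⟨j, h⟩ / β ⟨j, h⟩) * y ⟨j, h⟩|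
        else 0 with hgp
      have step1 : (∑ j : Fin p,
          |dt ⟨n - p + (j : ℕ), by omega⟩ / β j - (α j / β j) * y j|) =
          ∑ j : Fin p, gp (j : ℕ) := by
        apply Finset.sum_congr rfl
        intro j _
        simp only [hgp]
        rw [dif_pos j.isLt]
      rw [step1, Fin.sum_univ_eq_sum_range gp p]
      apply Finset.sum_congr rfl
      intro j hj
      rw [Finset.mem_range] at hj
      simp only [hgp, hgk]
      rw [dif_pos hj, dif_neg (by omega), dif_pos (by omega : n - p + j < n)]
      have hidx : n - p + j - (n - p) = j := by omega
      simp_rw [hidx]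
    rw [e1, e2]
    ring
  refine ⟨key, fun y => ?_⟩
  rw [key, key]
  have hpt : ∀ j : Fin p,
      |ystar j| + |dt ⟨n - p + (j : ℕ), by omega⟩ / β j - (α j / β j) * ystar j| ≤
      |y j| + |dt ⟨n - p + (j : ℕ), by omega⟩ / β j - (α j / β j) * y j| := by
    intro j
    set a := α j with ha
    set bb := β j with hb
    set d := dt ⟨n - p + (j : ℕ), by omega⟩ with hd
    have hbpos := hβ0 j
    have hapos := hα0 j
    by_cases hab : a ≤ bb
    · have : ystar j = 0 := if_pos hab
      rw [this, abs_zero, zero_add, mul_zero, sub_zero]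
      have t1 : |d / bb| ≤ |d / bb - (a / bb) * y j| + |(a / bb) * y j| := by
        calc |d / bb| = |(d / bb - (a / bb) * y j) + (a / bb) * y j| := by congr 1; ring
          _ ≤ _ := abs_add_le _ _
      have t2 : |(a / bb) * y j| ≤ |y j| := by
        rw [abs_mul]
        have : |a / bb| ≤ 1 := by
          rw [abs_of_nonneg (by positivity)]
          rw [div_le_one hbpos]; exact hab
        nlinarith [abs_nonneg (y j)]
      linarith
    · have hba : bb < a := not_le.mp hab
      have hapos' : 0 < a := lt_trans hbpos hba
      have : ystar j = d / a := if_neg hab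
      rw [this]
      have hz : d / bb - (a / bb) * (d / a) = 0 := by
        field_simp
        ring
      rw [hz, abs_zero, add_zero]
      have hfac : d / bb - (a / bb) * y j = (a / bb) * (d / a - y j) := by
        field_simp
      rw [hfac, abs_mul]
      have hge1 : 1 ≤ |a / bb| := by
        rw [abs_of_nonneg (by positivity), le_div_iff₀ hbpos, one_mul]
        exact le_of_lt hba
      have t1 : |d / a - y j| ≤ |a / bb| * |d / a - y j| :=
        le_mul_of_one_le_left (abs_nonneg _) hge1
      have t2 : |d / a| ≤ |y j| + |d / a - y j| := by
        calc |d / a| = |y j + (d / a - y j)| := by congr 1; ring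
          _ ≤ _ := abs_add_le _ _
      linarith
  have hsum : (∑ j, |ystar j|) + ∑ j : Fin p,
      |dt ⟨n - p + (j : ℕ), by omega⟩ / β j - (α j / β j) * ystar j| ≤
      (∑ j, |y j|) + ∑ j : Fin p,
      |dt ⟨n - p + (j : ℕ), by omega⟩ / β j - (α j / β j) * y j| := by
    rw [← Finset.sum_add_distrib, ← Finset.sum_add_distrib]
    exact Finset.sum_le_sum fun j _ => hpt j
  linarith
end

section
/- Suppose ‖ξ̃‖₂² ≤ τ_b. Then in the generalized-SVD setting, MSE_D - MSE_LS = Σ_{j=1}^{p-q} ξ̃_j² - σ² Σ_{j=1}^{p-q} β_j²/α_j² ≤ τ_b; in particular MSE_LS ≥ MSE_D - τ_b. Moreover, if V_e is chosen so that Σ_{j=1}^{p-q} β_j²/α_j² = τ_b/σ², then MSE_D ≤ MSE_LS. -/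
/-- if `‖ξ̃‖₂² ≤ τ_b` then `MSE_D - MSE_LS ≤ τ_b`, so
`MSE_LS ≥ MSE_D - τ_b`; and if `V_e` is chosen so that
`Σ_{j≤p-q} β_j²/α_j² = τ_b/σ²`, then `MSE_D ≤ MSE_LS`. -/
theorem stmt_18 (p q : ℕ) (hqp : q ≤ p) (ξt : Fin p → ℝ) (σ2 : ℝ)
    (hσ2 : 0 < σ2) (τb : ℝ)
    (α β : Fin p → ℝ) (hα0 : ∀ j, 0 < α j) (hβ0 : ∀ j, 0 < β j)
    (hτ : ∑ j, ξt j ^ 2 ≤ τb) :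
    let MSED : ℝ := (∑ j : Fin p, if (j : ℕ) < p - q then ξt j ^ 2 else 0) +
      σ2 * ∑ j : Fin p, if p - q ≤ (j : ℕ) then (β j / α j) ^ 2 else 0
    let MSELS : ℝ := σ2 * ∑ j : Fin p, (β j / α j) ^ 2
    (MSED - MSELS =
      (∑ j : Fin p, if (j : ℕ) < p - q then ξt j ^ 2 else 0) -
        σ2 * ∑ j : Fin p, if (j : ℕ) < p - q then (β j / α j) ^ 2 else 0) ∧
    MSED - MSELS ≤ τb ∧
    MSELS ≥ MSED - τb ∧
    ((∑ j : Fin p, if (j : ℕ) < p - q then (β j / α j) ^ 2 else 0) =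
        τb / σ2 → MSED ≤ MSELS) := by
  intro MSED MSELS
  have hsplit : (∑ j : Fin p, (β j / α j) ^ 2) =
      (∑ j : Fin p, if (j : ℕ) < p - q then (β j / α j) ^ 2 else 0) +
      (∑ j : Fin p, if p - q ≤ (j : ℕ) then (β j / α j) ^ 2 else 0) := by
    rw [← Finset.sum_add_distrib]
    refine Finset.sum_congr rfl fun j _ => ?_
    rcases lt_or_ge (j : ℕ) (p - q) with h | h
    · simp [h, not_le.mpr h]
    · simp [h, not_lt.mpr h]
  have heq : MSED - MSELS =
      (∑ j : Fin p, if (j : ℕ) < p - q then ξt j ^ 2 else 0) -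
        σ2 * ∑ j : Fin p, if (j : ℕ) < p - q then (β j / α j) ^ 2 else 0 := by
    simp only [MSED, MSELS, hsplit]
    ring
  have hS1 : (∑ j : Fin p, if (j : ℕ) < p - q then ξt j ^ 2 else 0) ≤ τb := by
    refine le_trans ?_ hτ
    refine Finset.sum_le_sum fun j _ => ?_
    split <;> [exact le_refl _; positivity]
  have hS2 : 0 ≤ σ2 * ∑ j : Fin p, if (j : ℕ) < p - q then (β j / α j) ^ 2 else 0 := by
    apply mul_nonneg hσ2.le
    refine Finset.sum_nonneg fun j _ => ?_
    split <;> positivity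
  have hle : MSED - MSELS ≤ τb := by rw [heq]; linarith
  refine ⟨heq, hle, by linarith, fun h => ?_⟩
  have : σ2 * (τb / σ2) = τb := by field_simp
  rw [← sub_nonpos, heq, h, this]
  linarith
end
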